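/- Let n ≥ 1 and let S be a set of at least n+2 points in ℓ_4^n. Then the ratio (max_{x,y ∈ S} ‖x−y‖_4) / (min_{x,y ∈ S, x≠y} ‖x−y‖_4) is at least (1 + 2/n)^{1/4} if n is even, and at least (1 + 2/(n − (n+2)^{−1}))^{1/4} if n is odd. -/

import Mathlib

open Finset

/-- The 4-norm on `ℝ^n`. -/
noncomputable def norm4 {n : ℕ} (x : Fin n → ℝ) : ℝ :=
  (∑ m, (x m) ^ 4) ^ ((1 : ℝ) / 4)

/-!
A set of `n + 2` points `x` of `ℝⁿ` carries an affine dependence: weights `c`, not all zero, with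
`∑ c x = 0` and `∑ c x • x = 0`. For such weights and every coordinate `j`, expanding the fourth
power gives `∑_{x,y} c x c y (x j - y j)⁴ = 6 (∑ c x (x j)²)² ≥ 0`, hence
`∑_{x,y} c x c y ‖x - y‖₄⁴ ≥ 0`. In this sum, pairs of weights of equal sign are bounded using the
diameter `M` and pairs of opposite sign using the minimal distance `m`. If `k` points carry
positive and `l` nonpositive weight, Cauchy–Schwarz on both parts turns this into
`2 k l m⁴ ≤ (2 k l - (k + l)) M⁴`, and `k + l = n + 2` with `4 k l ≤ (n + 2)²`, or
`4 k l ≤ (n + 2)² - 1` when `n` is odd, gives the bound.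
-/

theorem sum_sum_mul_mul_sub_pow_four {α R : Type*} [CommRing R] (T : Finset α) (c a : α → R)
    (h0 : ∑ x ∈ T, c x = 0) (h1 : ∑ x ∈ T, c x * a x = 0) :
    ∑ x ∈ T, ∑ y ∈ T, c x * c y * (a x - a y) ^ 4 = 6 * (∑ x ∈ T, c x * a x ^ 2) ^ 2 := by
  have expand : ∀ x y, c x * c y * (a x - a y) ^ 4 =
      c x * a x ^ 4 * c y - 4 * (c x * a x ^ 3 * (c y * a y))
        + 6 * (c x * a x ^ 2 * (c y * a y ^ 2)) - 4 * (c x * a x * (c y * a y ^ 3))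
        + c x * (c y * a y ^ 4) := fun x y => by ring
  simp only [expand, sum_add_distrib, sum_sub_distrib, ← mul_sum, ← sum_mul, h0, h1]
  ring

section Weights

variable {α : Type*} (c : α → ℝ) (D : α → α → ℝ) {b B : ℝ}

lemma sum_sum_mul_mul_le_of_mul_nonneg {Q : Finset α} (hc : ∀ x ∈ Q, ∀ y ∈ Q, 0 ≤ c x * c y)
    (hdiag : ∀ x ∈ Q, D x x = 0) (hD : ∀ x ∈ Q, ∀ y ∈ Q, D x y ≤ B) :
    ∑ x ∈ Q, ∑ y ∈ Q, c x * c y * D x y ≤ B * ((∑ x ∈ Q, c x) ^ 2 - ∑ x ∈ Q, c x ^ 2) :=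
  calc ∑ x ∈ Q, ∑ y ∈ Q, c x * c y * D x y
      = B * (∑ x ∈ Q, c x) ^ 2 + ∑ x ∈ Q, ∑ y ∈ Q, c x * c y * (D x y - B) := by
        rw [sq, sum_mul_sum, mul_sum, ← sum_add_distrib]
        refine sum_congr rfl fun x _ => ?_
        rw [mul_sum, ← sum_add_distrib]
        exact sum_congr rfl fun y _ => by ring
    _ ≤ B * (∑ x ∈ Q, c x) ^ 2 + ∑ x ∈ Q, c x * c x * (D x x - B) := by
        classical
        gcongr with x hx
        rw [← add_sum_erase _ _ hx]
        refine add_le_of_nonpos_right (sum_nonpos fun y hy => ?_)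
        have hy := mem_of_mem_erase hy
        exact mul_nonpos_of_nonneg_of_nonpos (hc x hx y hy) (sub_nonpos.2 (hD x hx y hy))
    _ = B * ((∑ x ∈ Q, c x) ^ 2 - ∑ x ∈ Q, c x ^ 2) := by
        rw [sum_congr rfl fun x hx => show c x * c x * (D x x - B) = -(B * c x ^ 2) by
          rw [hdiag x hx]; ring, sum_neg_distrib, ← mul_sum]
        ring

lemma sum_sum_mul_mul_le_of_mul_nonpos {Q R : Finset α} (hc : ∀ x ∈ Q, ∀ y ∈ R, c x * c y ≤ 0)
    (hD : ∀ x ∈ Q, ∀ y ∈ R, b ≤ D x y) :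
    ∑ x ∈ Q, ∑ y ∈ R, c x * c y * D x y ≤ b * ((∑ x ∈ Q, c x) * ∑ y ∈ R, c y) :=
  calc ∑ x ∈ Q, ∑ y ∈ R, c x * c y * D x y ≤ ∑ x ∈ Q, ∑ y ∈ R, c x * c y * b :=
        sum_le_sum fun x hx => sum_le_sum fun y hy =>
          mul_le_mul_of_nonpos_left (hD x hx y hy) (hc x hx y hy)
    _ = b * ((∑ x ∈ Q, c x) * ∑ y ∈ R, c y) := by
        rw [sum_mul_sum, mul_sum]
        refine sum_congr rfl fun x _ => ?_
        rw [mul_sum]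
        exact sum_congr rfl fun y _ => by ring

lemma two_mul_mul_sq_le_of_sum_sum_nonneg [DecidableEq α] {P N : Finset α} (hPN : Disjoint P N)
    (hP : ∀ x ∈ P, 0 < c x) (hN : ∀ x ∈ N, c x ≤ 0) (hc : ∑ x ∈ N, c x = -∑ x ∈ P, c x)
    (hdiag : ∀ x ∈ P ∪ N, D x x = 0) (hlow : ∀ x ∈ P ∪ N, ∀ y ∈ P ∪ N, x ≠ y → b ≤ D x y)
    (hup : ∀ x ∈ P ∪ N, ∀ y ∈ P ∪ N, D x y ≤ B)
    (hsum : 0 ≤ ∑ x ∈ P ∪ N, ∑ y ∈ P ∪ N, c x * c y * D x y) :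
    2 * b * (∑ x ∈ P, c x) ^ 2 ≤
      B * (2 * (∑ x ∈ P, c x) ^ 2 - ∑ x ∈ P, c x ^ 2 - ∑ x ∈ N, c x ^ 2) := by
  have hne : ∀ x ∈ P, ∀ y ∈ N, x ≠ y := fun x hx y hy hxy =>
    disjoint_left.1 hPN hx (hxy ▸ hy)
  have hPP := sum_sum_mul_mul_le_of_mul_nonneg c D
    (fun x hx y hy => (mul_pos (hP x hx) (hP y hy)).le)
    (fun x hx => hdiag x (mem_union_left _ hx))
    (fun x hx y hy => hup x (mem_union_left _ hx) y (mem_union_left _ hy))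
  have hNN := sum_sum_mul_mul_le_of_mul_nonneg c D
    (fun x hx y hy => mul_nonneg_of_nonpos_of_nonpos (hN x hx) (hN y hy))
    (fun x hx => hdiag x (mem_union_right _ hx))
    (fun x hx y hy => hup x (mem_union_right _ hx) y (mem_union_right _ hy))
  have hPN' := sum_sum_mul_mul_le_of_mul_nonpos c D
    (fun x hx y hy => mul_nonpos_of_nonneg_of_nonpos (hP x hx).le (hN y hy))
    (fun x hx y hy => hlow x (mem_union_left _ hx) y (mem_union_right _ hy) (hne x hx y hy))
  have hNP' := sum_sum_mul_mul_le_of_mul_nonpos c D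
    (fun x hx y hy => mul_nonpos_of_nonpos_of_nonneg (hN x hx) (hP y hy).le)
    (fun x hx y hy => hlow x (mem_union_right _ hx) y (mem_union_left _ hy)
      (hne y hy x hx).symm)
  simp only [sum_union hPN, sum_add_distrib] at hsum
  rw [hc] at hNN hPN' hNP'
  linarith

lemma exists_card_mul_le_of_sum_sum_nonneg {T : Finset α} (h0 : ∑ x ∈ T, c x = 0)
    (hc : ∃ x ∈ T, c x ≠ 0) (hdiag : ∀ x ∈ T, D x x = 0)
    (hlow : ∀ x ∈ T, ∀ y ∈ T, x ≠ y → b ≤ D x y) (hup : ∀ x ∈ T, ∀ y ∈ T, D x y ≤ B)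
    (hsum : 0 ≤ ∑ x ∈ T, ∑ y ∈ T, c x * c y * D x y) :
    ∃ k l : ℕ, 0 < k ∧ 0 < l ∧ k + l = #T ∧
      2 * b * (k * l) ≤ B * (2 * (k * l) - (k + l)) := by
  classical
  obtain ⟨x₀, hx₀, hcx₀⟩ := hc
  have hB : 0 ≤ B := hdiag x₀ hx₀ ▸ hup x₀ hx₀ x₀ hx₀
  set P := T.filter (0 < c ·)
  set N := T.filter (¬0 < c ·)
  have hT : P ∪ N = T := filter_union_filter_not_eq _ _
  have hPN : Disjoint P N := disjoint_filter_filter_not _ _ _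
  have hP : ∀ x ∈ P, 0 < c x := fun x hx => (mem_filter.1 hx).2
  have hN : ∀ x ∈ N, c x ≤ 0 := fun x hx => not_lt.1 (mem_filter.1 hx).2
  have hcN : ∑ x ∈ N, c x = -∑ x ∈ P, c x := by
    rw [← hT, sum_union hPN] at h0
    linarith
  have hs : 0 < ∑ x ∈ P, c x := by
    rcases lt_or_gt_of_ne hcx₀ with h | h
    · have : ∑ x ∈ N, c x < 0 :=
        sum_neg' hN ⟨x₀, mem_filter.2 ⟨hx₀, h.not_gt⟩, h⟩
      linarith
    · exact sum_pos' (fun x hx => (hP x hx).le) ⟨x₀, mem_filter.2 ⟨hx₀, h⟩, h⟩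
  have hPne : P.Nonempty := nonempty_of_sum_ne_zero hs.ne'
  have hNne : N.Nonempty := nonempty_of_sum_ne_zero (by rw [hcN]; exact neg_ne_zero.2 hs.ne')
  rw [← hT] at hdiag hlow hup hsum
  have key := two_mul_mul_sq_le_of_sum_sum_nonneg c D hPN hP hN hcN hdiag hlow hup hsum
  have csP := sq_sum_le_card_mul_sum_sq (s := P) (f := c)
  have csN := sq_sum_le_card_mul_sum_sq (s := N) (f := c)
  rw [hcN, neg_sq] at csN
  refine ⟨#P, #N, card_pos.2 hPne, card_pos.2 hNne, by rw [← card_union_of_disjoint hPN, hT], ?_⟩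
  refine le_of_mul_le_mul_left ?_ (pow_pos hs 2)
  have hk : (0 : ℝ) ≤ #P := Nat.cast_nonneg _
  have hl : (0 : ℝ) ≤ #N := Nat.cast_nonneg _
  nlinarith [mul_le_mul_of_nonneg_left csP (mul_nonneg hB hl),
    mul_le_mul_of_nonneg_left csN (mul_nonneg hB hk),
    mul_le_mul_of_nonneg_right key (mul_nonneg hk hl)]

end Weights

lemma norm4_nonneg {n : ℕ} (x : Fin n → ℝ) : 0 ≤ norm4 x :=
  Real.rpow_nonneg (sum_nonneg fun m _ => by positivity) _

lemma norm4_pow_four {n : ℕ} (x : Fin n → ℝ) : norm4 x ^ 4 = ∑ m, x m ^ 4 := by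
  rw [norm4, ← Real.rpow_natCast, ← Real.rpow_mul (sum_nonneg fun m _ => by positivity)]
  norm_num

lemma norm4_pos {n : ℕ} {x : Fin n → ℝ} (hx : x ≠ 0) : 0 < norm4 x := by
  obtain ⟨j, hj⟩ := Function.ne_iff.mp hx
  exact Real.rpow_pos_of_pos
    (sum_pos' (fun m _ => by positivity) ⟨j, mem_univ _, Even.pow_pos (by decide) hj⟩) _

lemma sum_sum_mul_mul_norm4_sub_pow_four_nonneg {n : ℕ} {T : Finset (Fin n → ℝ)}
    {c : (Fin n → ℝ) → ℝ} (h0 : ∑ x ∈ T, c x = 0) (h1 : ∑ x ∈ T, c x • x = 0) :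
    0 ≤ ∑ x ∈ T, ∑ y ∈ T, c x * c y * norm4 (x - y) ^ 4 :=
  calc 0 ≤ ∑ j, 6 * (∑ x ∈ T, c x * x j ^ 2) ^ 2 := by positivity
    _ = ∑ j, ∑ x ∈ T, ∑ y ∈ T, c x * c y * (x j - y j) ^ 4 := by
        refine sum_congr rfl fun j _ => (sum_sum_mul_mul_sub_pow_four T c (· j) h0 ?_).symm
        simpa using congrFun h1 j
    _ = ∑ x ∈ T, ∑ y ∈ T, c x * c y * norm4 (x - y) ^ 4 := by
        simp only [norm4_pow_four, Pi.sub_apply, mul_sum]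
        rw [sum_comm]
        exact sum_congr rfl fun x _ => sum_comm

noncomputable def schutteBound (n : ℕ) : ℝ :=
  if Even n then 1 + 2 / (n : ℝ) else 1 + 2 / ((n : ℝ) - ((n : ℝ) + 2)⁻¹)

lemma schutteBound_of_odd {n : ℕ} (hn : ¬Even n) :
    schutteBound n = ((n : ℝ) + 1) * (n + 3) / (n ^ 2 + 2 * n - 1) := by
  have h1 : (1 : ℝ) ≤ n := by exact_mod_cast (Nat.not_even_iff_odd.1 hn).pos
  have h2 : (n : ℝ) + 2 ≠ 0 := by positivity
  have h3 : (n : ℝ) ^ 2 + 2 * n - 1 ≠ 0 := by nlinarith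
  have hsub : (n : ℝ) - ((n : ℝ) + 2)⁻¹ = (n ^ 2 + 2 * n - 1) / (n + 2) := by
    field_simp
  rw [schutteBound, if_neg hn, hsub, div_div_eq_mul_div, one_add_div h3]
  ring

lemma schutteBound_pos (n : ℕ) : 0 < schutteBound n := by
  by_cases hn : Even n
  · rw [schutteBound, if_pos hn]
    positivity
  · have h1 : (1 : ℝ) ≤ n := by exact_mod_cast (Nat.not_even_iff_odd.1 hn).pos
    rw [schutteBound_of_odd hn]
    exact div_pos (by positivity) (by nlinarith)

lemma schutteBound_mul_le {n k l : ℕ} (hk : 0 < k) (hl : 0 < l) (hkl : k + l = n + 2)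
    {b B : ℝ} (hb : 0 < b) (hB : 0 ≤ B) (h : 2 * b * (k * l) ≤ B * (2 * (k * l) - (k + l))) :
    schutteBound n * b ≤ B := by
  have hkl' : (k : ℝ) + l = n + 2 := by exact_mod_cast hkl
  rw [hkl'] at h
  have hK : (0 : ℝ) < k * l := by positivity
  by_cases hn : Even n
  · have hamgm : 4 * ((k : ℝ) * l) ≤ (n + 2) ^ 2 := by nlinarith [sq_nonneg ((k : ℝ) - l)]
    have key : (n + 2) * b ≤ n * B := by
      refine le_of_mul_le_mul_left ?_ hK
      nlinarith [mul_le_mul_of_nonneg_left hamgm hB]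
    have hn0 : (0 : ℝ) < n := by
      rcases Nat.eq_zero_or_pos n with rfl | hn0
      · simp only [Nat.cast_zero, zero_add, zero_mul] at key
        linarith
      · exact_mod_cast hn0
    rw [schutteBound, if_pos hn, one_add_div hn0.ne', div_mul_eq_mul_div, div_le_iff₀ hn0]
    linarith
  · have hne : k ≠ l := by
      rintro rfl
      exact hn ⟨k - 1, by omega⟩
    have hgap : 1 ≤ ((k : ℝ) - l) ^ 2 := by
      rcases Nat.lt_or_gt_of_ne hne with h' | h'
      · have : (k : ℝ) + 1 ≤ l := by exact_mod_cast h'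
        nlinarith
      · have : (l : ℝ) + 1 ≤ k := by exact_mod_cast h'
        nlinarith
    have hamgm : 4 * ((k : ℝ) * l) ≤ (n + 2) ^ 2 - 1 := by nlinarith
    have key : (n + 1) * (n + 3) * b ≤ (n ^ 2 + 2 * n - 1) * B := by
      refine le_of_mul_le_mul_left ?_ hK
      nlinarith [mul_le_mul_of_nonneg_left hamgm hB]
    have hd : (0 : ℝ) < n ^ 2 + 2 * n - 1 := by
      have : (0 : ℝ) < (n + 1) * (n + 3) * b := by positivity
      nlinarith
    rw [schutteBound_of_odd hn, div_mul_eq_mul_div, div_le_iff₀ hd]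
    linarith

lemma rpow_one_div_four_le_div {r m M : ℝ} (hr : 0 ≤ r) (hm : 0 < m) (hM : 0 ≤ M)
    (h : r * m ^ 4 ≤ M ^ 4) : r ^ ((1 : ℝ) / 4) ≤ M / m := by
  rw [one_div, Real.rpow_inv_le_iff_of_pos hr (by positivity) (by norm_num),
    show (4 : ℝ) = (4 : ℕ) by norm_num, Real.rpow_natCast, div_pow, le_div_iff₀ (by positivity)]
  exact h

lemma schutteBound_mul_pow_four_le {n : ℕ} {T : Finset (Fin n → ℝ)} (hT : #T = n + 2)
    {m M : ℝ} (hm : 0 < m) (hlow : ∀ x ∈ T, ∀ y ∈ T, x ≠ y → m ≤ norm4 (x - y))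
    (hup : ∀ x ∈ T, ∀ y ∈ T, norm4 (x - y) ≤ M) :
    schutteBound n * m ^ 4 ≤ M ^ 4 := by
  obtain ⟨c, h1, h0, hc⟩ := Module.exists_nontrivial_relation_sum_zero_of_finrank_succ_lt_card
    (by rw [hT, Module.finrank_fin_fun]; omega : Module.finrank ℝ (Fin n → ℝ) + 1 < #T)
  obtain ⟨k, l, hk, hl, hkl, h⟩ := exists_card_mul_le_of_sum_sum_nonneg c
    (fun x y => norm4 (x - y) ^ 4) h0 hc (fun x _ => by simp [norm4_pow_four])
    (fun x hx y hy hxy => pow_le_pow_left₀ hm.le (hlow x hx y hy hxy) 4)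
    (fun x hx y hy => pow_le_pow_left₀ (norm4_nonneg _) (hup x hx y hy) 4)
    (sum_sum_mul_mul_norm4_sub_pow_four_nonneg h0 h1)
  exact schutteBound_mul_le hk hl (hkl.trans hT) (pow_pos hm 4) (by positivity) h

lemma finite_setOf_norm4_sub {n : ℕ} (S : Finset (Fin n → ℝ)) :
    {d : ℝ | ∃ x ∈ S, ∃ y ∈ S, d = norm4 (x - y)}.Finite := by
  refine ((S.finite_toSet.prod S.finite_toSet).image fun p => norm4 (p.1 - p.2)).subset ?_
  rintro _ ⟨x, hx, y, hy, rfl⟩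
  exact ⟨(x, y), ⟨hx, hy⟩, rfl⟩

theorem stmt0 (n : ℕ) (S : Finset (Fin n → ℝ)) (hS : n + 2 ≤ S.card) :
    (if Even n then (1 + 2 / (n : ℝ)) ^ ((1 : ℝ) / 4)
      else (1 + 2 / ((n : ℝ) - ((n : ℝ) + 2)⁻¹)) ^ ((1 : ℝ) / 4)) ≤
    sSup {d : ℝ | ∃ x ∈ S, ∃ y ∈ S, d = norm4 (x - y)} /
      sInf {d : ℝ | ∃ x ∈ S, ∃ y ∈ S, x ≠ y ∧ d = norm4 (x - y)} := by
  set M := sSup {d : ℝ | ∃ x ∈ S, ∃ y ∈ S, d = norm4 (x - y)}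
  set m := sInf {d : ℝ | ∃ x ∈ S, ∃ y ∈ S, x ≠ y ∧ d = norm4 (x - y)}
  have hAfin := finite_setOf_norm4_sub S
  have hBfin : {d : ℝ | ∃ x ∈ S, ∃ y ∈ S, x ≠ y ∧ d = norm4 (x - y)}.Finite :=
    hAfin.subset fun _ ⟨x, hx, y, hy, _, hd⟩ => ⟨x, hx, y, hy, hd⟩
  have hM : ∀ x ∈ S, ∀ y ∈ S, norm4 (x - y) ≤ M :=
    fun x hx y hy => le_csSup hAfin.bddAbove ⟨x, hx, y, hy, rfl⟩
  have hm : ∀ x ∈ S, ∀ y ∈ S, x ≠ y → m ≤ norm4 (x - y) :=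
    fun x hx y hy hxy => csInf_le hBfin.bddBelow ⟨x, hx, y, hy, hxy, rfl⟩
  obtain ⟨x₀, hx₀, y₀, hy₀, hxy₀⟩ := one_lt_card.1 (by omega : 1 < S.card)
  obtain ⟨x, hx, y, hy, hxy, hmxy⟩ : m ∈ _ :=
    Set.Nonempty.csInf_mem ⟨_, x₀, hx₀, y₀, hy₀, hxy₀, rfl⟩ hBfin
  have hm_pos : 0 < m := hmxy ▸ norm4_pos (sub_ne_zero.2 hxy)
  obtain ⟨T, hTS, hT⟩ := exists_subset_card_eq hS
  have key := schutteBound_mul_pow_four_le hT hm_pos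
    (fun x hx y hy => hm x (hTS hx) y (hTS hy)) (fun x hx y hy => hM x (hTS hx) y (hTS hy))
  calc _ = schutteBound n ^ ((1 : ℝ) / 4) := by unfold schutteBound; split_ifs <;> rfl
    _ ≤ M / m := rpow_one_div_four_le_div (schutteBound_pos n).le hm_pos
        ((norm4_nonneg _).trans (hM x hx y hy)) key
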